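/- arXiv:0802.1415 — 7 statements merged into one kernel-verified Lean document; each statement's English description precedes it below -/
import Mathlib

section
/- Let (L,·) be a loop with holomorph H(L). Then H(L) is an automorphic inverse property loop (AIPL) if and only if (1) AUM(L) is an abelian group, (2) for all α, β ∈ AUM(L) the triple (β⁻¹, α, I) is an autotopism of (L,·), and (3) (L,·) is an AIPL. -/
/-- A loop: a set with a binary operation `*` and identity `1` such that
the equations `a * x = b` and `y * a = b` have unique solutions. -/
class Loop (L : Type*) extends Mul L, One L where
  one_mul : ∀ x : L, 1 * x = x
  mul_one : ∀ x : L, x * 1 = x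
  mulLeft_exu : ∀ a b : L, ∃! x : L, a * x = b
  mulRight_exu : ∀ a b : L, ∃! y : L, y * a = b

namespace Loop

variable {L : Type*} [Loop L]

/-- The right inverse `x^ρ` of `x`, the unique solution of `x * x^ρ = 1`. -/
noncomputable def rinv (x : L) : L := (mulLeft_exu x 1).exists.choose

/-- The left inverse `x^λ` of `x`, the unique solution of `x^λ * x = 1`. -/
noncomputable def linv (x : L) : L := (mulRight_exu x 1).exists.choose

theorem mul_rinv (x : L) : x * rinv x = 1 := (mulLeft_exu x 1).exists.choose_spec

theorem linv_mul (x : L) : linv x * x = 1 := (mulRight_exu x 1).exists.choose_spec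

/-- Any automorphism of a loop fixes the identity element. -/
theorem aut_map_one (α : L ≃* L) : α 1 = 1 :=
  (mulRight_exu (α 1) (α 1)).unique
    (by rw [← map_mul, Loop.one_mul]) (Loop.one_mul _)

end Loop

/-- An automorphic inverse property loop (AIPL): `(x·y)^ρ = x^ρ · y^ρ`. -/
def IsAIPL (L : Type*) [Loop L] : Prop :=
  ∀ x y : L, Loop.rinv (x * y) = Loop.rinv x * Loop.rinv y

/-- A cross inverse property loop (CIPL): `(x·y) · x^ρ = y`. -/
def IsCIPL (L : Type*) [Loop L] : Prop :=
  ∀ x y : L, (x * y) * Loop.rinv x = y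

/-- An autotopism of a loop: a triple of bijections `(A, B, C)` with
`xA · yB = (x·y)C` for all `x, y`. -/
def IsAutotopism {L : Type*} [Loop L] (A B C : L → L) : Prop :=
  Function.Bijective A ∧ Function.Bijective B ∧ Function.Bijective C ∧
    ∀ x y : L, A x * B y = C (x * y)

/-- The holomorph `H(L) = AUM(L) × L` of a loop `L`, with operation
`(α,x)∘(β,y) = (αβ, xβ·y)` (automorphisms act on the right, so
`αβ` is "first `α`, then `β`", i.e. `α.trans β`, and `xβ = β x`). -/
def Holomorph (L : Type*) [Loop L] : Type _ := (L ≃* L) × L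

namespace Holomorph

variable {L : Type*} [Loop L]

instance : Mul (Holomorph L) := ⟨fun a b => (a.1.trans b.1, b.1 a.2 * b.2)⟩

instance : One (Holomorph L) := ⟨(MulEquiv.refl L, 1)⟩

theorem mul_def (a b : Holomorph L) : a * b = (a.1.trans b.1, b.1 a.2 * b.2) := rfl

theorem one_def : (1 : Holomorph L) = (MulEquiv.refl L, (1 : L)) := rfl

noncomputable instance : Loop (Holomorph L) where
  one_mul a := by
    show ((MulEquiv.refl L).trans a.1, a.1 1 * a.2) = a
    have h1 : (MulEquiv.refl L).trans a.1 = a.1 := by ext t; rfl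
    have h2 : a.1 (1 : L) * a.2 = a.2 := by rw [Loop.aut_map_one, Loop.one_mul]
    exact Prod.ext h1 h2
  mul_one a := by
    show (a.1.trans (MulEquiv.refl L), (MulEquiv.refl L) a.2 * 1) = a
    have h1 : a.1.trans (MulEquiv.refl L) = a.1 := by ext t; rfl
    have h2 : (MulEquiv.refl L) a.2 * (1 : L) = a.2 := Loop.mul_one _
    exact Prod.ext h1 h2
  mulLeft_exu a b := by
    obtain ⟨y, hy, hyu⟩ := Loop.mulLeft_exu ((a.1.symm.trans b.1) a.2) b.2
    refine ⟨(a.1.symm.trans b.1, y), ?_, ?_⟩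
    · show (a.1.trans (a.1.symm.trans b.1), (a.1.symm.trans b.1) a.2 * y) = b
      have h1 : a.1.trans (a.1.symm.trans b.1) = b.1 := by
        ext t; simp [MulEquiv.trans_apply]
      exact Prod.ext h1 hy
    · intro c hc
      have h1 : a.1.trans c.1 = b.1 := congrArg Prod.fst hc
      have h2 : c.1 a.2 * c.2 = b.2 := congrArg Prod.snd hc
      have hc1 : c.1 = a.1.symm.trans b.1 := by
        ext t
        have h := congrArg (fun e : L ≃* L => e (a.1.symm t)) h1
        simpa [MulEquiv.trans_apply] using h
      have hc2 : c.2 = y := hyu c.2 (by rw [← hc1]; exact h2)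
      exact Prod.ext hc1 hc2
  mulRight_exu a b := by
    obtain ⟨w, hw, hwu⟩ := Loop.mulRight_exu a.2 b.2
    refine ⟨(b.1.trans a.1.symm, a.1.symm w), ?_, ?_⟩
    · show ((b.1.trans a.1.symm).trans a.1, a.1 (a.1.symm w) * a.2) = b
      have h1 : (b.1.trans a.1.symm).trans a.1 = b.1 := by
        ext t; simp [MulEquiv.trans_apply]
      have h2 : a.1 (a.1.symm w) * a.2 = b.2 := by
        rw [MulEquiv.apply_symm_apply]; exact hw
      exact Prod.ext h1 h2
    · intro c hc
      have h1 : c.1.trans a.1 = b.1 := congrArg Prod.fst hc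
      have h2 : a.1 c.2 * a.2 = b.2 := congrArg Prod.snd hc
      have hc1 : c.1 = b.1.trans a.1.symm := by
        ext t
        have h := congrArg (fun e : L ≃* L => a.1.symm (e t)) h1
        simpa [MulEquiv.trans_apply] using h
      have hc2 : c.2 = a.1.symm w := by
        have h := hwu (a.1 c.2) h2
        have h' := congrArg a.1.symm h
        simpa using h'
      exact Prod.ext hc1 hc2

end Holomorph

namespace Loop

variable {L : Type*} [Loop L]

theorem rinv_eq {x y : L} (h : x * y = 1) : rinv x = y :=
  ((mulLeft_exu x 1).unique (mul_rinv x) h)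

theorem rinv_linv (x : L) : rinv (linv x) = x := rinv_eq (linv_mul x)

theorem mul_left_cancel' {a x y : L} (h : a * x = a * y) : x = y :=
  ((mulLeft_exu a (a * y)).unique h rfl)

theorem mul_right_cancel' {a x y : L} (h : x * a = y * a) : x = y :=
  ((mulRight_exu a (y * a)).unique h rfl)

theorem rinv_injective : Function.Injective (rinv : L → L) := fun x y h => by
  have h1 : x * rinv y = 1 := h ▸ mul_rinv x
  exact mul_right_cancel' (h1.trans (mul_rinv y).symm)

end Loop

theorem Holomorph.rinv_formula {L : Type*} [Loop L] (a : Holomorph L) :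
    Loop.rinv a = (a.1.symm, Loop.rinv (a.1.symm a.2)) := by
  apply Loop.rinv_eq
  show (a.1.trans a.1.symm, a.1.symm a.2 * Loop.rinv (a.1.symm a.2)) = 1
  refine Prod.ext ?_ (Loop.mul_rinv _)
  ext t; simp

/-- `H(L)` is an AIPL iff (1) `AUM(L)` is abelian, (2)
`(β⁻¹, α, I)` is an autotopism of `L` for all `α, β ∈ AUM(L)`, and
(3) `L` is an AIPL. -/
theorem statement_2 {L : Type*} [Loop L] :
    IsAIPL (Holomorph L) ↔
      (∀ α β : L ≃* L, α.trans β = β.trans α) ∧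
      (∀ α β : L ≃* L, IsAutotopism (⇑β.symm) (⇑α) (id : L → L)) ∧
      IsAIPL L := by
  constructor
  · intro h
    -- extract the second-component identity
    have key : ∀ (α β : L ≃* L) (x y : L),
        Loop.rinv (x * α.symm y) = β.symm (Loop.rinv x) * Loop.rinv y := by
      intro α β x y
      have hh := h (α, α x) (β, β y)
      rw [Holomorph.mul_def, Holomorph.rinv_formula,
        Holomorph.rinv_formula ((α, α x) : Holomorph L),
        Holomorph.rinv_formula ((β, β y) : Holomorph L),
        Holomorph.mul_def ((α, α x) : Holomorph L) (β, β y)] at hh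
      have h2 := congrArg Prod.snd hh
      simpa [MulEquiv.symm_trans_apply, map_mul] using h2
    have hAIPL : IsAIPL L := by
      intro x y
      simpa using key (MulEquiv.refl L) (MulEquiv.refl L) x y
    have aut_id : ∀ (γ : L ≃* L) (x : L), γ x = x := by
      have aut_id' : ∀ (γ : L ≃* L) (x : L), γ.symm x = x := by
        intro γ x
        have k1 := key γ (MulEquiv.refl L) x x
        have k2 := key (MulEquiv.refl L) (MulEquiv.refl L) x x
        simp only [MulEquiv.refl_symm, MulEquiv.coe_refl, id_eq] at k1 k2
        have := Loop.rinv_injective (k1.trans k2.symm)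
        exact Loop.mul_left_cancel' this
      intro γ x
      have := aut_id' γ.symm x
      simpa using this
    refine ⟨?_, ?_, hAIPL⟩
    · intro α β
      ext t
      simp [MulEquiv.trans_apply, aut_id]
    · intro α β
      refine ⟨β.symm.bijective, α.bijective, Function.bijective_id, ?_⟩
      intro x y
      simp [aut_id]
  · rintro ⟨h1, h2, h3⟩
    have aut_id : ∀ (γ : L ≃* L) (x : L), γ x = x := by
      have aut_id' : ∀ (γ : L ≃* L) (x : L), γ.symm x = x := by
        intro γ x
        have := (h2 γ γ).2.2.2 x 1
        rw [Loop.aut_map_one, Loop.mul_one, Loop.mul_one] at this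
        exact this
      intro γ x
      have := aut_id' γ.symm x
      simpa using this
    intro a b
    rw [Holomorph.mul_def,
      Holomorph.rinv_formula ((a.1.trans b.1, b.1 a.2 * b.2) : Holomorph L),
      Holomorph.rinv_formula a, Holomorph.rinv_formula b,
      Holomorph.mul_def ((a.1.symm, Loop.rinv (a.1.symm a.2)) : Holomorph L)
        (b.1.symm, Loop.rinv (b.1.symm b.2))]
    refine Prod.ext ?_ ?_
    · ext t
      simp [MulEquiv.trans_apply, MulEquiv.symm_trans_apply, aut_id]
    · show Loop.rinv ((a.1.trans b.1).symm (b.1 a.2 * b.2)) =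
        b.1.symm (Loop.rinv (a.1.symm a.2)) * Loop.rinv (b.1.symm b.2)
      simp only [MulEquiv.symm_trans_apply, aut_id]
      exact h3 a.2 b.2
end

section
/- Let (L,·) be a loop with holomorph H(L). Then H(L) is a cross inverse property loop (CIPL) if and only if (1) AUM(L) is an abelian group, (2) for all α, β ∈ AUM(L) the triple (β⁻¹, α, I) is an autotopism of (L,·), and (3) (L,·) is a CIPL. -/
section Aux

namespace Loop

variable {L : Type*} [Loop L]

theorem rinv_unique {x y : L} (h : x * y = 1) : y = rinv x :=
  (mulLeft_exu x 1).unique h (mul_rinv x)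

theorem mulRight_cancel {a u v : L} (h : u * a = v * a) : u = v := by
  have := (mulRight_exu a (v * a)).unique h rfl
  exact this

end Loop

namespace Holomorph

variable {L : Type*} [Loop L]

theorem rinv_eq (a : Holomorph L) :
    Loop.rinv a = (a.1.symm, Loop.rinv (a.1.symm a.2)) := by
  refine (Loop.rinv_unique ?_).symm
  show (a.1.trans a.1.symm, a.1.symm a.2 * Loop.rinv (a.1.symm a.2)) = (1 : Holomorph L)
  rw [one_def]
  refine Prod.ext ?_ ?_
  · ext t; simp
  · exact Loop.mul_rinv _

end Holomorph

end Aux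

/-- `H(L)` is a CIPL iff (1) `AUM(L)` is abelian, (2)
`(β⁻¹, α, I)` is an autotopism of `L` for all `α, β ∈ AUM(L)`, and
(3) `L` is a CIPL. -/
theorem statement_3 {L : Type*} [Loop L] :
    IsCIPL (Holomorph L) ↔
      (∀ α β : L ≃* L, α.trans β = β.trans α) ∧
      (∀ α β : L ≃* L, IsAutotopism (⇑β.symm) (⇑α) (id : L → L)) ∧
      IsCIPL L := by
  constructor
  · intro h
    -- master equation
    have key : ∀ (α β : L ≃* L) (x y : L),
        (α.trans β).trans α.symm = β ∧
        α.symm (β x * y) * Loop.rinv (α.symm x) = y := by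
      intro α β x y
      have := h (α, x) (β, y)
      rw [Holomorph.rinv_eq (α, x)] at this
      have h1 : ((α.trans β).trans α.symm, α.symm (β x * y) * Loop.rinv (α.symm x)) = ((β, y) : Holomorph L) := this
      exact ⟨congrArg Prod.fst h1, congrArg Prod.snd h1⟩
    have hcomm : ∀ (α β : L ≃* L) (t : L), β (α t) = α (β t) := by
      intro α β t
      have h1 := (key α β 1 1).1
      have h2 := congrArg (fun e : L ≃* L => e t) h1
      have h3 : α.symm (β (α t)) = β t := h2
      have := congrArg α h3
      simpa using this
    have hcipl : IsCIPL L := by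
      intro x y
      have := (key (MulEquiv.refl L) (MulEquiv.refl L) x y).2
      simpa using this
    refine ⟨?_, ?_, hcipl⟩
    · intro α β
      ext t
      exact (hcomm α β t).symm ▸ rfl
    · intro α β
      refine ⟨β.symm.bijective, α.bijective, Function.bijective_id, ?_⟩
      intro x y
      have hmain : ∀ (α β : L ≃* L) (x y : L), β x * α.symm y = x * y := by
        intro α β x y
        have h2 := (key α β (α x) y).2
        rw [map_mul α.symm, MulEquiv.symm_apply_apply] at h2
        have h4 : α.symm (β (α x)) = β x := by
          rw [hcomm α β x, MulEquiv.symm_apply_apply]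
        rw [h4] at h2
        have h5 := hcipl x y
        exact Loop.mulRight_cancel (h2.trans h5.symm)
      have := hmain α.symm β.symm x y
      simpa using this
  · rintro ⟨hab, haut, hc⟩ a b
    obtain ⟨α, x⟩ := a
    obtain ⟨β, y⟩ := b
    rw [Holomorph.rinv_eq (α, x)]
    show ((α.trans β).trans α.symm, α.symm (β x * y) * Loop.rinv (α.symm x)) = ((β, y) : Holomorph L)
    refine Prod.ext ?_ ?_
    · rw [hab α β]; ext t; simp
    · set u := α.symm x with hu
      have hx : x = α u := by rw [hu, MulEquiv.apply_symm_apply]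
      have h1 : α.symm (β x) = β u := by
        rw [hx]
        have h2 := congrArg (fun e : L ≃* L => e u) (hab β α)
        have h3 : α (β u) = β (α u) := h2
        rw [← h3, MulEquiv.symm_apply_apply]
      rw [map_mul α.symm, h1]
      have h4 := (haut α.symm β.symm).2.2.2 u y
      simp only [MulEquiv.symm_symm, id_eq] at h4
      rw [h4]
      exact hc u y
end

section
/- Let (L,·) be a loop with holomorph H(L). If H(L) is a cross inverse property loop (CIPL), then AUM(L) = {I} and H(L) is isomorphic to L. -/
/-- Helper constructor for elements of the holomorph. -/
def Holomorph.pmk {L : Type*} [Loop L] (α : L ≃* L) (x : L) : Holomorph L := (α, x)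

/-- if `H(L)` is a CIPL, then `AUM(L) = {I}` and `H(L) ≅ L`. -/
theorem statement_5 {L : Type*} [Loop L] (h : IsCIPL (Holomorph L)) :
    (∀ α : L ≃* L, α = MulEquiv.refl L) ∧ Nonempty (Holomorph L ≃* L) := by
  have key : ∀ α : L ≃* L, ∀ y : L, α.symm y = y := by
    intro α y
    have hcomp : Holomorph.pmk α 1 * Holomorph.pmk α.symm 1 = 1 := by
      show (α.trans α.symm, α.symm (1:L) * (1:L)) = (1 : Holomorph L)
      rw [Loop.aut_map_one, Loop.mul_one, MulEquiv.self_trans_symm]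
      exact Holomorph.one_def.symm
    have hrinv : Loop.rinv (Holomorph.pmk α 1) = Holomorph.pmk α.symm 1 :=
      (Loop.mulLeft_exu (Holomorph.pmk α 1) 1).unique (Loop.mul_rinv _) hcomp
    have hc := h (Holomorph.pmk α 1) (Holomorph.pmk (MulEquiv.refl L) y)
    rw [hrinv] at hc
    have h2 : α.symm ((MulEquiv.refl L) ((MulEquiv.refl L) (1:L)) * y) * 1 = y :=
      congrArg Prod.snd hc
    simp only [MulEquiv.refl_apply] at h2
    rw [Loop.one_mul, Loop.mul_one] at h2
    exact h2
  have triv : ∀ α : L ≃* L, α = MulEquiv.refl L := by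
    intro α
    ext x
    have hx := key α (α x)
    rw [MulEquiv.symm_apply_apply] at hx
    simpa using hx.symm
  refine ⟨triv, ⟨?_⟩⟩
  exact
    { toFun := fun a => a.2
      invFun := fun x => Holomorph.pmk (MulEquiv.refl L) x
      left_inv := fun a => Prod.ext (triv a.1).symm rfl
      right_inv := fun _ => rfl
      map_mul' := fun a b => by
        show b.1 a.2 * b.2 = a.2 * b.2
        rw [triv b.1]
        rfl }
end

section
/- Let (L,·) be a loop with holomorph H(L). Then H(L) is a cross inverse property loop (CIPL) if and only if AUM(L) = {I} and (L,·) is a CIPL. -/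
theorem Loop.eq_rinv {L : Type*} [Loop L] {a b : L} (h : a * b = 1) : b = Loop.rinv a :=
  (Loop.mulLeft_exu a 1).unique h (Loop.mul_rinv a)

/-- Helper constructor for elements of the holomorph. -/
def hmk {L : Type*} [Loop L] (α : L ≃* L) (x : L) : Holomorph L := (α, x)

theorem Holomorph.rinv_eq_s7 {L : Type*} [Loop L] (α : L ≃* L) (x : L) :
    Loop.rinv (hmk α x) = hmk α.symm (Loop.rinv (α.symm x)) := by
  symm
  apply Loop.eq_rinv
  rw [Holomorph.mul_def, Holomorph.one_def]
  refine Prod.ext ?_ ?_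
  · show α.trans α.symm = MulEquiv.refl L
    ext t; simp
  · exact Loop.mul_rinv _

/-- `H(L)` is a CIPL iff `AUM(L) = {I}` and `L` is a CIPL. -/
theorem statement_7 {L : Type*} [Loop L] :
    IsCIPL (Holomorph L) ↔ (∀ α : L ≃* L, α = MulEquiv.refl L) ∧ IsCIPL L := by
  have key : ∀ (α β : L ≃* L) (x y : L),
      ((hmk α x * hmk β y) * Loop.rinv (hmk α x)).2
        = α.symm (β x * y) * Loop.rinv (α.symm x) := by
    intro α β x y
    rw [Holomorph.rinv_eq_s7, Holomorph.mul_def, Holomorph.mul_def]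
    rfl
  constructor
  · intro h
    have h2 : ∀ (β : L ≃* L) (x y : L), (β x * y) * Loop.rinv x = y := by
      intro β x y
      have := congrArg Prod.snd (h (hmk (MulEquiv.refl L) x) (hmk β y))
      rw [key] at this
      simpa [hmk] using this
    have hC : IsCIPL L := fun x y => by simpa using h2 (MulEquiv.refl L) x y
    refine ⟨fun β => ?_, hC⟩
    ext x
    have h1 : β x * Loop.rinv x = 1 := by
      have := h2 β x 1; rwa [Loop.mul_one] at this
    exact (Loop.mulRight_exu (Loop.rinv x) 1).unique h1 (Loop.mul_rinv x)
  · rintro ⟨hA, hC⟩ a b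
    obtain ⟨α, x⟩ := a
    obtain ⟨β, y⟩ := b
    show (hmk α x * hmk β y) * Loop.rinv (hmk α x) = hmk β y
    have hsnd := key α β x y
    refine Prod.ext ?_ ?_
    · exact (hA _).trans (hA β).symm
    · rw [hsnd, hA α, hA β]
      simpa [hmk] using hC x y
end

section
/- Let (L,·) be a loop with holomorph H(L). Then H(L) is a cross inverse property loop (CIPL) if and only if AUM(L) is an abelian group and for all x, y ∈ L and all α, β ∈ AUM(L): xβ · (y·x^ρ) = yα. -/
section Aux

variable {L : Type*} [Loop L]

theorem Loop.rinv_one : Loop.rinv (1 : L) = 1 :=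
  (Loop.mulLeft_exu (1:L) 1).unique (Loop.mul_rinv 1) (Loop.one_mul 1)

theorem Holomorph.rinv_eq_s9 (a : Holomorph L) :
    Loop.rinv a = (a.1.symm, Loop.rinv (a.1.symm a.2)) := by
  refine (Loop.mulLeft_exu a 1).unique (Loop.mul_rinv a) ?_
  show (a.1.trans a.1.symm, a.1.symm a.2 * Loop.rinv (a.1.symm a.2)) = 1
  refine Prod.ext ?_ (Loop.mul_rinv _)
  ext t; simp

/-- From CIP derive the reverse form `x * (y * x^ρ) = y`. -/
theorem cip_rev {L : Type*} [Loop L] (h : ∀ x y : L, (x * y) * Loop.rinv x = y)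
    (x y : L) : x * (y * Loop.rinv x) = y := by
  obtain ⟨u, hu, -⟩ := Loop.mulLeft_exu x y
  rw [← hu, h x u]

/-- From the reverse form derive CIP, using left cancellation. -/
theorem cip_of_rev {L : Type*} [Loop L]
    (h : ∀ x y : L, x * (y * Loop.rinv x) = y) (x y : L) :
    (x * y) * Loop.rinv x = y :=
  (Loop.mulLeft_exu x (x * y)).unique (h x (x * y)) rfl

end Aux

/-- `H(L)` is a CIPL iff `AUM(L)` is abelian and
`xβ · (y·x^ρ) = yα` for all `x, y ∈ L`, `α, β ∈ AUM(L)`. -/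
theorem statement_9 {L : Type*} [Loop L] :
    IsCIPL (Holomorph L) ↔
      (∀ α β : L ≃* L, α.trans β = β.trans α) ∧
      ∀ (x y : L) (α β : L ≃* L), β x * (y * Loop.rinv x) = α y :=  by
  constructor
  · intro h
    have key : ∀ (α β : L ≃* L) (x y : L),
        ((α.trans β).trans α.symm, α.symm (β x * y) * Loop.rinv (α.symm x))
          = ((β, y) : Holomorph L) := by
      intro α β x y
      have := h (α, x) (β, y)
      erw [Holomorph.rinv_eq_s9, Holomorph.mul_def, Holomorph.mul_def] at this
      exact this
    have cip1 : ∀ x y : L, (x * y) * Loop.rinv x = y := by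
      intro x y
      have := congrArg Prod.snd (key (MulEquiv.refl L) (MulEquiv.refl L) x y)
      simpa using this
    have triv : ∀ (α : L ≃* L) (t : L), α t = t := by
      have hsymm : ∀ (α : L ≃* L) (y : L), α.symm y = y := by
        intro α y
        have := congrArg Prod.snd (key α (MulEquiv.refl L) (α 1) y)
        simp only [MulEquiv.refl_apply, map_mul, MulEquiv.symm_apply_apply] at this
        rw [cip1] at this
        exact this
      intro α t
      have := hsymm α (α t)
      rw [MulEquiv.symm_apply_apply] at this
      exact this.symm
    refine ⟨?_, ?_⟩
    · intro α β; ext t; simp [triv]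
    · intro x y α β
      simp only [triv]
      exact (cip_rev cip1 x y).trans rfl
  · rintro ⟨-, hT⟩
    have triv : ∀ (α : L ≃* L) (t : L), α t = t := by
      intro α t
      have := hT 1 t α (MulEquiv.refl L)
      simpa [Loop.rinv_one, Loop.one_mul, Loop.mul_one] using this.symm
    have hrev : ∀ x y : L, x * (y * Loop.rinv x) = y := by
      intro x y
      have := hT x y (MulEquiv.refl L) (MulEquiv.refl L)
      simpa using this
    have cip1 := cip_of_rev hrev
    intro a b
    erw [Holomorph.rinv_eq_s9, Holomorph.mul_def, Holomorph.mul_def]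
    refine Prod.ext ?_ ?_
    · ext t; simp [triv]
    · show a.1.symm (b.1 a.2 * b.2) * Loop.rinv (a.1.symm a.2) = b.2
      simp [triv, cip1]
end

section
/- Let (L,·) be a loop with holomorph H(L). If H(L) is a cross inverse property loop (CIPL), then for all α, β ∈ AUM(L) the triples (β, α, I), (α, β, I), (β, I, α) and (I, α, β) are all autotopisms of (L,·). -/
/-- if `H(L)` is a CIPL then `(β, α, I)`, `(α, β, I)`,
`(β, I, α)` and `(I, α, β)` are autotopisms of `L` for all `α, β ∈ AUM(L)`. -/
theorem statement_13 {L : Type*} [Loop L] (h : IsCIPL (Holomorph L)) :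
    ∀ α β : L ≃* L,
      IsAutotopism (⇑β) (⇑α) (id : L → L) ∧
      IsAutotopism (⇑α) (⇑β) (id : L → L) ∧
      IsAutotopism (⇑β) (id : L → L) (⇑α) ∧
      IsAutotopism (id : L → L) (⇑α) (⇑β) := by
  -- Formula for the right inverse in the holomorph.
  have hrinv : ∀ a : Holomorph L,
      Loop.rinv a = (a.1.symm, Loop.rinv (a.1.symm a.2)) := by
    intro a
    refine (Loop.mulLeft_exu a 1).unique (Loop.mul_rinv a) ?_
    show (a.1.trans a.1.symm, a.1.symm a.2 * Loop.rinv (a.1.symm a.2)) = 1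
    refine Prod.ext ?_ (Loop.mul_rinv _)
    ext t; simp
  -- Key identity extracted from the CIP on the holomorph.
  have key : ∀ (α : L ≃* L) (x y : L),
      α.symm (x * y) * Loop.rinv (α.symm x) = y := by
    intro α x y
    have := h (α, x) (MulEquiv.refl L, y)
    rw [hrinv (α, x)] at this
    have h2 := congrArg Prod.snd this
    exact h2
  -- L itself is a CIPL.
  have cipl : IsCIPL L := by
    intro x y
    have := key (MulEquiv.refl L) x y
    simpa using this
  -- Every automorphism of L is the identity.
  have haut : ∀ (α : L ≃* L) (t : L), α t = t := by
    intro α t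
    have hdist : ∀ x y : L, α.symm (x * y) = α.symm x * y := fun x y =>
      (Loop.mulRight_exu (Loop.rinv (α.symm x)) y).unique (key α x y)
        (cipl (α.symm x) y)
    have hsymm : ∀ y, α.symm y = y := by
      intro y
      have h1 := hdist 1 y
      rw [Loop.one_mul, Loop.aut_map_one α.symm, Loop.one_mul] at h1
      exact h1
    have := hsymm (α t)
    rw [α.symm_apply_apply] at this; exact this.symm
  intro α β
  have hα : ⇑α = id := funext fun t => haut α t
  have hβ : ⇑β = id := funext fun t => haut β t
  rw [hα, hβ]
  refine ⟨?_, ?_, ?_, ?_⟩ <;>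
    exact ⟨Function.bijective_id, Function.bijective_id, Function.bijective_id,
      fun x y => rfl⟩
end

section
/- Let (L,·) be a loop with holomorph H(L). If H(L) is a cross inverse property loop (CIPL), then L is a flexible CIPL of exponent 2; that is, L is a CIPL satisfying x·(y·x) = (x·y)·x for all x,y ∈ L and x·x = e for all x ∈ L (equivalently x^ρ = x^λ = x for every x). -/
namespace Loop

variable {L : Type*} [Loop L]

theorem rinv_eq_s14 {a z : L} (hz : a * z = 1) : rinv a = z :=
  (mulLeft_exu a 1).unique (mul_rinv a) hz

theorem rinv_inj {a b : L} (h : rinv a = rinv b) : a = b := by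
  apply mul_right_cancel' (a := rinv b)
  rw [mul_rinv, ← h, mul_rinv]

theorem linv_rinv (x : L) : linv (rinv x) = x := rinv_inj (rinv_linv (rinv x))

theorem cipl2 (hC : IsCIPL L) (x y : L) : x * (y * rinv x) = y :=
  mul_right_cancel' (hC x (y * rinv x))

theorem rinv_star (hC : IsCIPL L) (x y : L) : y * rinv (x * y) = rinv x := by
  have h := hC (x * y) (rinv x)
  rwa [hC x y] at h

theorem rinv_mul' (hC : IsCIPL L) (x y : L) : rinv (x * y) = rinv x * rinv y :=
  mul_left_cancel' (a := y)
    ((rinv_star hC x y).trans (cipl2 hC y (rinv x)).symm)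

end Loop

/-- if `H(L)` is a CIPL, then `L` is a flexible CIPL of
exponent 2. -/
theorem statement_14 {L : Type*} [Loop L] (h : IsCIPL (Holomorph L)) :
    IsCIPL L ∧ (∀ x y : L, x * (y * x) = (x * y) * x) ∧ (∀ x : L, x * x = 1) := by
  have hrinv : ∀ a : Holomorph L,
      Loop.rinv a = (a.1.symm, Loop.rinv (a.1.symm a.2)) := by
    intro a
    apply Loop.rinv_eq_s14
    show (a.1.trans a.1.symm, a.1.symm a.2 * Loop.rinv (a.1.symm a.2)) = 1
    refine Prod.ext ?_ (Loop.mul_rinv _)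
    ext t; simp
  have key : ∀ (α β : L ≃* L) (x y : L),
      α.symm (β x * y) * Loop.rinv (α.symm x) = y := by
    intro α β x y
    have h2 := h (α, x) (β, y)
    erw [hrinv] at h2
    exact congrArg Prod.snd h2
  have hC : IsCIPL L := by
    intro x y
    have hk := key (MulEquiv.refl L) (MulEquiv.refl L) x y
    simpa using hk
  have aut_id' : ∀ (α : L ≃* L) (y : L), α.symm y = y := by
    intro α y
    have hk := key α (MulEquiv.refl L) y y
    simp only [MulEquiv.refl_apply, map_mul] at hk
    rwa [hC (α.symm y) (α.symm y)] at hk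
  let J : L ≃* L :=
    { toFun := Loop.rinv, invFun := Loop.linv,
      left_inv := Loop.linv_rinv, right_inv := Loop.rinv_linv,
      map_mul' := Loop.rinv_mul' hC }
  have hid : ∀ x : L, Loop.rinv x = x := by
    intro x
    have := aut_id' J.symm x
    have h' : J x = x := by simpa using this
    exact h'
  refine ⟨hC, ?_, ?_⟩
  · intro x y
    have h1 : x * (y * x) = y := by
      have := Loop.cipl2 hC x y; rwa [hid] at this
    have h2 : (x * y) * x = y := by
      have := hC x y; rwa [hid] at this
    rw [h1, h2]
  · intro x
    have := Loop.mul_rinv x; rwa [hid] at this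
end
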